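/- Let s_0, s_1, s_2 be positive real numbers, N = s_0 + s_1 + s_2, and L(x_1, x_2) = s_1 log x_1 + s_2 log x_2 − N log(1 + x_1 + x_2). Let H_L(x) be the toric Hessian of L, i.e. the 2×2 matrix with entries θ_iθ_jL where θ_i = x_i ∂/∂x_i. Then at the critical point x̂ = (s_1/s_0, s_2/s_0) one has det H_L(x̂) = s_0 s_1 s_2 / (s_0 + s_1 + s_2) ≠ 0, and therefore det(H_L(x̂))^{−1} = 1/(s_0 s_1) + 1/(s_0 s_2) + 1/(s_1 s_2). -/

import Mathlib

/-!
The logarithmic derivatives of `L` are `θᵢL = sᵢ - N xᵢ / (1 + x₁ + x₂)`, so with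
`σ = 1 + x₁ + x₂` the toric Hessian is `-(N / σ²)` times `[[x₁(1+x₂), -x₁x₂], [-x₁x₂, x₂(1+x₁)]]`,
whose determinant is `N² x₁ x₂ / σ³` on the whole positive orthant. At `x̂` one has
`σ = N / s₀` and `x₁x₂ = s₁s₂ / s₀²`, which gives `s₀s₁s₂ / N`.
-/

noncomputable section

/-- The first Euler operator `θ₁ = x₁ ∂/∂x₁` on functions of two real variables. -/
def theta1 (f : ℝ × ℝ → ℝ) : ℝ × ℝ → ℝ :=
  fun x => x.1 * deriv (fun t => f (t, x.2)) x.1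

/-- The second Euler operator `θ₂ = x₂ ∂/∂x₂` on functions of two real variables. -/
def theta2 (f : ℝ × ℝ → ℝ) : ℝ × ℝ → ℝ :=
  fun x => x.2 * deriv (fun t => f (x.1, t)) x.2

open Set Filter Topology

section EulerOperators

variable {f g : ℝ × ℝ → ℝ} {s : Set (ℝ × ℝ)} {x : ℝ × ℝ}

theorem theta1_comp_swap (f : ℝ × ℝ → ℝ) : theta1 (f ∘ Prod.swap) = theta2 f ∘ Prod.swap :=
  rfl

theorem theta2_comp_swap (f : ℝ × ℝ → ℝ) : theta2 (f ∘ Prod.swap) = theta1 f ∘ Prod.swap :=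
  rfl

theorem theta1_apply_of_hasDerivAt {f' : ℝ} (h : HasDerivAt (fun t => f (t, x.2)) f' x.1) :
    theta1 f x = x.1 * f' := by
  rw [theta1, h.deriv]

theorem theta2_apply_of_hasDerivAt {f' : ℝ} (h : HasDerivAt (fun t => f (x.1, t)) f' x.2) :
    theta2 f x = x.2 * f' := by
  rw [theta2, h.deriv]

theorem theta1_congr_of_eqOn (hs : IsOpen s) (hfg : EqOn f g s) (hx : x ∈ s) :
    theta1 f x = theta1 g x := by
  have hnhds : ∀ᶠ t in 𝓝 x.1, (t, x.2) ∈ s :=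
    (continuous_id.prodMk continuous_const).continuousAt.preimage_mem_nhds (hs.mem_nhds hx)
  rw [theta1, theta1, EventuallyEq.deriv_eq (hnhds.mono fun t ht => hfg ht)]

theorem theta2_congr_of_eqOn (hs : IsOpen s) (hfg : EqOn f g s) (hx : x ∈ s) :
    theta2 f x = theta2 g x := by
  have hnhds : ∀ᶠ t in 𝓝 x.2, (x.1, t) ∈ s :=
    (continuous_const.prodMk continuous_id).continuousAt.preimage_mem_nhds (hs.mem_nhds hx)
  rw [theta2, theta2, EventuallyEq.deriv_eq (hnhds.mono fun t ht => hfg ht)]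

end EulerOperators

/-- In the affine chart `x₀ = 1`; `N` stands for `s₀ + s₁ + s₂`. -/
def logLikelihood (s1 s2 N : ℝ) : ℝ × ℝ → ℝ :=
  fun x => s1 * Real.log x.1 + s2 * Real.log x.2 - N * Real.log (1 + x.1 + x.2)

def toricHessianDet (f : ℝ × ℝ → ℝ) (x : ℝ × ℝ) : ℝ :=
  theta1 (theta1 f) x * theta2 (theta2 f) x - theta1 (theta2 f) x * theta2 (theta1 f) x

namespace logLikelihood

variable {s1 s2 N : ℝ} {x : ℝ × ℝ}

theorem comp_swap (s1 s2 N : ℝ) :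
    logLikelihood s1 s2 N ∘ Prod.swap = logLikelihood s2 s1 N := by
  funext x
  simp only [Function.comp_apply, logLikelihood, Prod.fst_swap, Prod.snd_swap]
  rw [add_right_comm 1 x.2 x.1]
  ring

theorem theta1_apply (hx₁ : 0 < x.1) (hx₂ : 0 < x.2) :
    theta1 (logLikelihood s1 s2 N) x = s1 - N * x.1 / (1 + x.1 + x.2) := by
  have hσ : 1 + x.1 + x.2 ≠ 0 := by positivity
  have hlog : HasDerivAt (fun t => Real.log (1 + t + x.2)) (1 / (1 + x.1 + x.2)) x.1 :=
    (((hasDerivAt_id' x.1).const_add 1).add_const x.2).log hσ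
  rw [theta1_apply_of_hasDerivAt ((((Real.hasDerivAt_log hx₁.ne').const_mul s1).add_const
    (s2 * Real.log x.2)).sub (hlog.const_mul N))]
  field_simp

theorem eqOn_theta1 :
    EqOn (theta1 (logLikelihood s1 s2 N)) (fun x => s1 - N * x.1 / (1 + x.1 + x.2))
      (Ioi 0 ×ˢ Ioi 0) :=
  fun _ hx => theta1_apply hx.1 hx.2

theorem theta1_theta1_apply (hx₁ : 0 < x.1) (hx₂ : 0 < x.2) :
    theta1 (theta1 (logLikelihood s1 s2 N)) x = -(N * x.1 * (1 + x.2)) / (1 + x.1 + x.2) ^ 2 := by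
  have hσ : 1 + x.1 + x.2 ≠ 0 := by positivity
  rw [theta1_congr_of_eqOn (isOpen_Ioi.prod isOpen_Ioi) eqOn_theta1 ⟨hx₁, hx₂⟩,
    theta1_apply_of_hasDerivAt ((((hasDerivAt_id' x.1).const_mul N).div
      (((hasDerivAt_id' x.1).const_add 1).add_const x.2) hσ).const_sub s1)]
  field_simp
  ring

theorem theta2_theta1_apply (hx₁ : 0 < x.1) (hx₂ : 0 < x.2) :
    theta2 (theta1 (logLikelihood s1 s2 N)) x = N * x.1 * x.2 / (1 + x.1 + x.2) ^ 2 := by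
  have hσ : 1 + x.1 + x.2 ≠ 0 := by positivity
  rw [theta2_congr_of_eqOn (isOpen_Ioi.prod isOpen_Ioi) eqOn_theta1 ⟨hx₁, hx₂⟩,
    theta2_apply_of_hasDerivAt (((hasDerivAt_const x.2 (N * x.1)).div
      ((hasDerivAt_id' x.2).const_add (1 + x.1)) (by simpa [add_assoc] using hσ)).const_sub s1)]
  field_simp
  ring

theorem theta2_theta2_apply (hx₁ : 0 < x.1) (hx₂ : 0 < x.2) :
    theta2 (theta2 (logLikelihood s1 s2 N)) x = -(N * x.2 * (1 + x.1)) / (1 + x.1 + x.2) ^ 2 := by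
  rw [← comp_swap s2 s1 N, theta2_comp_swap, theta2_comp_swap, Function.comp_apply,
    theta1_theta1_apply hx₂ hx₁, Prod.fst_swap, Prod.snd_swap, add_right_comm 1]

theorem theta1_theta2_apply (hx₁ : 0 < x.1) (hx₂ : 0 < x.2) :
    theta1 (theta2 (logLikelihood s1 s2 N)) x = N * x.1 * x.2 / (1 + x.1 + x.2) ^ 2 := by
  rw [← comp_swap s2 s1 N, theta2_comp_swap, theta1_comp_swap, Function.comp_apply,
    theta2_theta1_apply hx₂ hx₁, Prod.fst_swap, Prod.snd_swap, add_right_comm 1, mul_right_comm]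

theorem toricHessianDet_apply (hx₁ : 0 < x.1) (hx₂ : 0 < x.2) :
    toricHessianDet (logLikelihood s1 s2 N) x = N ^ 2 * x.1 * x.2 / (1 + x.1 + x.2) ^ 3 := by
  have hσ : 1 + x.1 + x.2 ≠ 0 := by positivity
  rw [toricHessianDet, theta1_theta1_apply hx₁ hx₂, theta2_theta2_apply hx₁ hx₂,
    theta1_theta2_apply hx₁ hx₂, theta2_theta1_apply hx₁ hx₂]
  field_simp
  ring

end logLikelihood

/-- At the critical point `x̂ = (s₁/s₀, s₂/s₀)` of
`L = s₁ log x₁ + s₂ log x₂ - N log(1+x₁+x₂)`, the toric Hessian determinant equals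
`s₀s₁s₂/(s₀+s₁+s₂) ≠ 0`, and its reciprocal is `1/(s₀s₁) + 1/(s₀s₂) + 1/(s₁s₂)`. -/
theorem stmt15 (s0 s1 s2 : ℝ) (h0 : 0 < s0) (h1 : 0 < s1) (h2 : 0 < s2)
    (N : ℝ) (hN : N = s0 + s1 + s2)
    (L : ℝ × ℝ → ℝ)
    (hL : L = fun x => s1 * Real.log x.1 + s2 * Real.log x.2 -
      N * Real.log (1 + x.1 + x.2))
    (xhat : ℝ × ℝ) (hxhat : xhat = (s1 / s0, s2 / s0))
    (detH : ℝ)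
    (hdetH : detH = theta1 (theta1 L) xhat * theta2 (theta2 L) xhat -
      theta1 (theta2 L) xhat * theta2 (theta1 L) xhat) :
    detH = s0 * s1 * s2 / (s0 + s1 + s2) ∧ detH ≠ 0 ∧
      detH⁻¹ = 1 / (s0 * s1) + 1 / (s0 * s2) + 1 / (s1 * s2) := by
  have hdet : detH = toricHessianDet (logLikelihood s1 s2 N) xhat := by
    subst hL
    exact hdetH
  rw [hxhat, logLikelihood.toricHessianDet_apply (div_pos h1 h0) (div_pos h2 h0), hN] at hdet
  have hformula : detH = s0 * s1 * s2 / (s0 + s1 + s2) := by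
    rw [hdet]
    field_simp
  refine ⟨hformula, by rw [hformula]; positivity, ?_⟩
  rw [hformula, inv_div]
  field_simp
  ring

end
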